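/- If x ∈ {0,1}^V is a Nash equilibrium of the minority game on G, then the support S_x = {i ∈ V : x_i = 1} is a Φ_c-valid control set. -/

import Mathlib

open Finset

variable {V : Type*}

/-- Agreement of a configuration on an (unordered) edge. -/
def agreeFun (x : V → Bool) : Sym2 V → Bool :=
  Sym2.lift ⟨fun a b => x a == x b, fun a b => by show (x a == x b) = (x b == x a); cases x a <;> cases x b <;> rfl⟩

/-- The potential of the majority game: number of edges whose endpoints agree. -/
def Phi [Fintype V] [DecidableEq V] (G : SimpleGraph V) [DecidableRel G.Adj]
    (x : V → Bool) : ℕ :=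
  (G.edgeFinset.filter (fun e => agreeFun x e = true)).card

/-- Number of neighbors of `i` playing action `a` in configuration `x`. -/
def nCount [Fintype V] (G : SimpleGraph V) [DecidableRel G.Adj]
    (x : V → Bool) (i : V) (a : Bool) : ℕ :=
  ((G.neighborFinset i).filter (fun j => x j = a)).card

/-- Majority-game utility: number of neighbors agreeing with `i`. -/
def lamC [Fintype V] (G : SimpleGraph V) [DecidableRel G.Adj]
    (x : V → Bool) (i : V) : ℕ :=
  ((G.neighborFinset i).filter (fun j => x j = x i)).card

/-- Minority-game utility: number of neighbors disagreeing with `i`. -/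
def lamA [Fintype V] (G : SimpleGraph V) [DecidableRel G.Adj]
    (x : V → Bool) (i : V) : ℕ :=
  ((G.neighborFinset i).filter (fun j => x j ≠ x i)).card

/-- `x` is a Nash equilibrium of the minority game. -/
def MinorityNE [Fintype V] [DecidableEq V] (G : SimpleGraph V) [DecidableRel G.Adj]
    (x : V → Bool) : Prop :=
  ∀ (i : V) (a : Bool), lamA G (Function.update x i a) i ≤ lamA G x i

/-- A monotone crusade from `C`: starts at the indicator of `C`, ends at all-ones,
and at each step one coordinate outside `C` is flipped from `0` to `1`. -/
def IsCrusade [DecidableEq V] (C : Finset V) (m : ℕ) (xs : ℕ → V → Bool) : Prop :=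
  xs 0 = (fun v => decide (v ∈ C)) ∧ xs m = (fun _ => true) ∧
    ∀ k < m, ∃ i, i ∉ C ∧ xs k i = false ∧ xs (k + 1) = Function.update (xs k) i true

/-- `C` is a `Φ_c`-valid control set: there is a `Φ_c`-adapted monotone crusade from `C`. -/
def ValidControlSet [Fintype V] [DecidableEq V] (G : SimpleGraph V) [DecidableRel G.Adj]
    (C : Finset V) : Prop :=
  ∃ m xs, IsCrusade C m xs ∧ ∀ k < m, Phi G (xs k) ≤ Phi G (xs (k + 1))

/-- `x ∈ Z`: reachable from the all-ones configuration by allowed down-flips. -/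
def InZ [Fintype V] [DecidableEq V] (G : SimpleGraph V) [DecidableRel G.Adj]
    (x : V → Bool) : Prop :=
  ∃ m, ∃ ys : ℕ → V → Bool, ys 0 = (fun _ => true) ∧ ys m = x ∧
    ∀ k < m, ∃ i, ys k i = true ∧ nCount G (ys k) i false ≤ nCount G (ys k) i true ∧
      ys (k + 1) = Function.update (ys k) i false

/-- `‖x‖₁`: number of coordinates equal to `1`. -/
def norm1 [Fintype V] (x : V → Bool) : ℕ :=
  (Finset.univ.filter (fun v => x v = true)).card

/-!
Let `x` be a Nash equilibrium of the minority game and `i` a vertex with `x i = 0`. Since `i`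
does not gain by switching to `1`, at most half of its neighbours play `0` in `x`. Switch the
zeros of `x` to `1` one at a time, in any order: along the way the zeros only shrink and the
ones only grow, so each switching vertex still sees at least as many neighbours playing `1`
as `0`. Switching such a vertex is a weak improvement in the majority game, and `Φ_c` is that
game's exact potential, so `Φ_c` never decreases.
-/

section Counts

variable [Fintype V] (G : SimpleGraph V) [DecidableRel G.Adj]

lemma lamA_eq_nCount_not (z : V → Bool) (i : V) : lamA G z i = nCount G z i (!z i) := by
  refine congrArg card (filter_congr fun j _ => ?_)
  cases z j <;> cases z i <;> simp

lemma nCount_true_mono {x y : V → Bool} (hxy : x ≤ y) (i : V) :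
    nCount G x i true ≤ nCount G y i true :=
  card_le_card (monotone_filter_right _ fun j _ => Bool.le_iff_imp.mp (hxy j))

lemma nCount_false_anti {x y : V → Bool} (hxy : x ≤ y) (i : V) :
    nCount G y i false ≤ nCount G x i false :=
  card_le_card (monotone_filter_right _ fun j _ hj => Bool.eq_false_of_le_false (hj ▸ hxy j))

variable [DecidableEq V]

lemma nCount_update_self (y : V → Bool) (i : V) (a b : Bool) :
    nCount G (Function.update y i a) i b = nCount G y i b := by
  refine congrArg card (filter_congr fun j hj => ?_)
  rw [Function.update_of_ne (G.ne_of_adj ((G.mem_neighborFinset i j).mp hj)).symm]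

lemma MinorityNE.nCount_false_le_true {x : V → Bool} (hx : MinorityNE G x) {i : V}
    (hi : x i = false) : nCount G x i false ≤ nCount G x i true := by
  simpa [lamA_eq_nCount_not, nCount_update_self, hi] using hx i true

end Counts

lemma agreeFun_update_of_notMem [DecidableEq V] (y : V → Bool) {i : V} (a : Bool) {e : Sym2 V}
    (he : i ∉ e) : agreeFun (Function.update y i a) e = agreeFun y e := by
  induction e using Sym2.inductionOn with
  | hf u v =>
    simp only [Sym2.mem_iff, not_or] at he
    simp [agreeFun, Function.update_of_ne (Ne.symm he.1), Function.update_of_ne (Ne.symm he.2)]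

section Potential

variable [Fintype V] [DecidableEq V] (G : SimpleGraph V) [DecidableRel G.Adj]

lemma card_agree_incident (z : V → Bool) (i : V) :
    #{e ∈ G.edgeFinset | agreeFun z e = true ∧ i ∈ e} = nCount G z i (z i) := by
  symm
  apply card_bij (fun j _ => s(i, j))
  · intro j hj
    simp only [mem_filter, SimpleGraph.mem_neighborFinset] at hj
    exact mem_filter.mpr
      ⟨G.mem_edgeFinset.mpr hj.1, by simp [agreeFun, hj.2], Sym2.mem_mk_left i j⟩
  · intro j _ j' _ h
    exact Sym2.congr_right.mp h
  · intro e he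
    rw [mem_filter, SimpleGraph.mem_edgeFinset] at he
    induction e using Sym2.inductionOn with
    | hf u v =>
      simp only [SimpleGraph.mem_edgeSet, agreeFun, Sym2.lift_mk, beq_iff_eq, Sym2.mem_iff] at he
      obtain ⟨hadj, hagree, rfl | rfl⟩ := he
      · exact ⟨v, by simp [hadj, hagree], rfl⟩
      · exact ⟨u, by simp [hadj.symm, hagree], Sym2.eq_swap⟩

lemma Phi_eq_card_agree_notMem_add (z : V → Bool) (i : V) :
    Phi G z = #{e ∈ G.edgeFinset | agreeFun z e = true ∧ i ∉ e} + nCount G z i (z i) := by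
  rw [← card_agree_incident, Phi, ← card_filter_add_card_filter_not (p := fun e => i ∈ e),
    filter_filter, filter_filter, add_comm]

lemma Phi_update_add (y : V → Bool) (i : V) (a : Bool) :
    Phi G (Function.update y i a) + nCount G y i (y i) = Phi G y + nCount G y i a := by
  have h_far : #{e ∈ G.edgeFinset | agreeFun (Function.update y i a) e = true ∧ i ∉ e}
      = #{e ∈ G.edgeFinset | agreeFun y e = true ∧ i ∉ e} :=
    congrArg card (filter_congr fun e _ =>
      and_congr_left fun he => by rw [agreeFun_update_of_notMem y a he])
  rw [Phi_eq_card_agree_notMem_add G _ i, Phi_eq_card_agree_notMem_add G y i, h_far,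
    nCount_update_self, Function.update_self]
  ring

lemma Phi_le_Phi_update (y : V → Bool) (i : V) {a : Bool}
    (h : nCount G y i (y i) ≤ nCount G y i a) : Phi G y ≤ Phi G (Function.update y i a) := by
  have := Phi_update_add G y i a
  omega

end Potential

section Crusade

variable [Fintype V] [DecidableEq V]

lemma exists_monotone_path_to_top {α : Type*} [Preorder α] (f : (V → Bool) → α) (C : Finset V)
    (hf : ∀ y i, (∀ v ∈ C, y v = true) → i ∉ C → y i = false →
      f y ≤ f (Function.update y i true))
    (y : V → Bool) (hy : ∀ v ∈ C, y v = true) :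
    ∃ m, ∃ xs : ℕ → V → Bool, xs 0 = y ∧ xs m = (fun _ => true) ∧ ∀ k < m,
      (∃ i, i ∉ C ∧ xs k i = false ∧ xs (k + 1) = Function.update (xs k) i true) ∧
        f (xs k) ≤ f (xs (k + 1)) := by
  induction hn : #{v | y v = false} generalizing y with
  | zero =>
    refine ⟨0, fun _ => y, rfl, funext fun v => ?_, by simp⟩
    simpa using filter_eq_empty_iff.mp (card_eq_zero.mp hn) (mem_univ v)
  | succ n ih =>
    obtain ⟨i, hi⟩ : ({v | y v = false} : Finset V).Nonempty := card_pos.mp (by omega)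
    replace hi : y i = false := (mem_filter.mp hi).2
    have hiC : i ∉ C := fun h => by simp [hy i h] at hi
    have hy' : ∀ v ∈ C, Function.update y i true v = true := fun v hv => by
      rw [Function.update_of_ne (ne_of_mem_of_not_mem hv hiC), hy v hv]
    have hzeros : ({v | Function.update y i true v = false} : Finset V)
        = ({v | y v = false} : Finset V).erase i := by
      ext v
      by_cases hv : v = i <;> simp [hv]
    have hn' : #{v | Function.update y i true v = false} = n := by
      rw [hzeros, card_erase_of_mem (by simpa using hi), hn, Nat.add_sub_cancel]
    obtain ⟨m, xs, h0, hm, hstep⟩ := ih _ hy' hn'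
    refine ⟨m + 1, fun k => if k = 0 then y else xs (k - 1), by simp, by simpa using hm, ?_⟩
    rintro (_ | k) hk
    · simpa [h0] using ⟨⟨i, hiC, hi, rfl⟩, hf y i hy hiC hi⟩
    · simpa using hstep k (by omega)

theorem validControlSet_of_Phi_le_update (G : SimpleGraph V) [DecidableRel G.Adj] (C : Finset V)
    (hC : ∀ y i, (∀ v ∈ C, y v = true) → i ∉ C → y i = false →
      Phi G y ≤ Phi G (Function.update y i true)) :
    ValidControlSet G C := by
  obtain ⟨m, xs, h0, hm, hstep⟩ :=
    exists_monotone_path_to_top (Phi G) C hC (fun v => decide (v ∈ C)) (by simp)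
  exact ⟨m, xs, ⟨h0, hm, fun k hk => (hstep k hk).1⟩, fun k hk => (hstep k hk).2⟩

end Crusade

/-- the support of a Nash equilibrium of the minority game is a
`Φ_c`-valid control set. -/
theorem minorityNE_support_valid [Fintype V] [DecidableEq V]
    (G : SimpleGraph V) [DecidableRel G.Adj] (x : V → Bool)
    (hx : MinorityNE G x) :
    ValidControlSet G (Finset.univ.filter (fun i => x i = true)) := by
  refine validControlSet_of_Phi_le_update G _ fun y i hy hiC hyi => ?_
  have hxy : x ≤ y := fun v => Bool.le_iff_imp.mpr fun hv => hy v (by simpa using hv)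
  have hxi : x i = false := by simpa using hiC
  refine Phi_le_Phi_update G y i ?_
  calc nCount G y i (y i) = nCount G y i false := by rw [hyi]
    _ ≤ nCount G x i false := nCount_false_anti G hxy i
    _ ≤ nCount G x i true := hx.nCount_false_le_true G hxi
    _ ≤ nCount G y i true := nCount_true_mono G hxy i
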